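/- arXiv:0812.3933 — 2 statements merged into one kernel-verified Lean document; each statement's English description precedes it below -/
import Mathlib

section
/- Let π = [π_0, π_1, …, π_{n+1}] be a permutation with π_1 ≠ 1. Then there exists an operation o, which is either a prefix reversal or a prefix transposition, such that b(π·o) ≤ b(π) − 1, i.e., applying o removes at least one breakpoint. -/
/-!
Let `x = π₁ ≥ 2`. One of its value-neighbours `v = x ± 1` sits at a position `k ≥ 3` (if `x - 1`
is at position 2, take `x + 1`); let `w = π_{k-1}`. Since `b(π)` ignores the pair `(π₀, π₁)`, the
prefix reversal `β(1, k)` only replaces the pair `(w, v)` by `(x, v)`, so it removes a breakpoint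
unless `w` is adjacent to `v`. In that case `w` is the other neighbour of `v`, so `v` lies strictly
between `π₁ = x` and `π_{k-1} = w` without occurring among `π₁, …, π_{k-1}`; hence this stretch is
not a ±1-walk and has a breakpoint `(π_{j-1}, π_j)`. Also `v ≠ n + 1` (which has only one
neighbour), and `π_{k+1}` is not adjacent to `v`, whose two neighbours are used up. The prefix
transposition `τ(1, j, k + 1)` then trades the two breakpoints `(π_{j-1}, π_j)` and `(v, π_{k+1})`
for the adjacency `(v, x)` and the single pair `(π_{j-1}, π_{k+1})`.
-/

/-- A permutation on `n` elements: a list `[π₀, π₁, …, π_{n+1}]` of distinct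
naturals that is a rearrangement of `0, 1, …, n+1` with `π₀ = 0` and
`π_{n+1} = n+1`. -/
def IsPerm (n : ℕ) (π : List ℕ) : Prop :=
  π.Perm (List.range (n + 2)) ∧ π.getD 0 0 = 0 ∧ π.getD (n + 1) 0 = n + 1

/-- Breakpoint count `b(π)`: `1` plus the number of indices `i` with
`2 ≤ i ≤ n+1` and `|π_i − π_{i−1}| ≠ 1` (these are exactly the consecutive
pairs of the tail `π₁, …, π_{n+1}`). -/
def bp (π : List ℕ) : ℕ :=
  1 + ((π.drop 1).zip (π.drop 2)).countP
        (fun p => !(p.1 + 1 == p.2 || p.2 + 1 == p.1))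

/-- Redefined breakpoint count `b′(π)`: the number of indices `i` with
`1 ≤ i ≤ n+1` and `|π_i − π_{i−1}| ≠ 1`. -/
def bp' (π : List ℕ) : ℕ :=
  (π.zip (π.drop 1)).countP
    (fun p => !(p.1 + 1 == p.2 || p.2 + 1 == p.1))

/-- Prefix reversal `β(1,j)`: `[π₀, π_{j−1}, …, π₁, π_j, …, π_{n+1}]`. -/
def prefixReversal (π : List ℕ) (j : ℕ) : List ℕ :=
  π.take 1 ++ ((π.drop 1).take (j - 1)).reverse ++ π.drop j

/-- Prefix transposition `τ(1,j,k)`: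
`[π₀, π_j, …, π_{k−1}, π₁, …, π_{j−1}, π_k, …, π_{n+1}]`. -/
def prefixTransposition (π : List ℕ) (j k : ℕ) : List ℕ :=
  π.take 1 ++ (π.drop j).take (k - j) ++ (π.drop 1).take (j - 1) ++ π.drop k

/-- Prefix transreversal `βτ(1,j,k)`:
`[π₀, π_j, …, π_{k−1}, π_{j−1}, …, π₁, π_k, …, π_{n+1}]`. -/
def prefixTransreversal (π : List ℕ) (j k : ℕ) : List ℕ :=
  π.take 1 ++ (π.drop j).take (k - j) ++ ((π.drop 1).take (j - 1)).reverse ++ π.drop k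

/-- A prefix operation: a prefix reversal, a prefix transposition, or a
prefix transreversal. -/
inductive PrefOp
  | rev (j : ℕ)
  | trans (j k : ℕ)
  | transrev (j k : ℕ)

/-- Apply a prefix operation to a permutation. -/
def PrefOp.apply (π : List ℕ) : PrefOp → List ℕ
  | .rev j => prefixReversal π j
  | .trans j k => prefixTransposition π j k
  | .transrev j k => prefixTransreversal π j k

/-- Validity of a prefix operation on a permutation of `n` elements:
`3 ≤ j ≤ n+1` for a prefix reversal, `2 ≤ j < k ≤ n+1` for a prefix
transposition or a prefix transreversal. -/
def PrefOp.Valid (n : ℕ) : PrefOp → Prop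
  | .rev j => 3 ≤ j ∧ j ≤ n + 1
  | .trans j k => 2 ≤ j ∧ j < k ∧ k ≤ n + 1
  | .transrev j k => 2 ≤ j ∧ j < k ∧ k ≤ n + 1

/-- Is the operation a prefix reversal? -/
def PrefOp.isRev : PrefOp → Bool
  | .rev _ => true
  | _ => false

/-- Is the operation a prefix transreversal? -/
def PrefOp.isTransrev : PrefOp → Bool
  | .transrev _ _ => true
  | _ => false

/-- Apply a sequence of prefix operations, left to right. -/
def applySeq : List ℕ → List PrefOp → List ℕ
  | π, [] => π
  | π, o :: os => applySeq (o.apply π) os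

/-- All operations in the sequence are valid for permutations of `n` elements. -/
def ValidSeq (n : ℕ) (ops : List PrefOp) : Prop :=
  ∀ o ∈ ops, o.Valid n

/-- `fm π` is `m(π) + 1`, where `m(π)` is the largest index `m` such that
`π_i = i` for all `0 ≤ i ≤ m`; i.e. the length of the longest already-sorted
prefix of `π`. -/
def fm (π : List ℕ) : ℕ :=
  ((List.range π.length).takeWhile (fun i => π.getD i 0 == i)).length

/-- Forward-march prefix reversal: reverses the segment
`π_{m(π)+1}, …, π_{j−1}` in place. -/
def fmPrefixReversal (π : List ℕ) (j : ℕ) : List ℕ :=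
  π.take (fm π) ++ ((π.drop (fm π)).take (j - fm π)).reverse ++ π.drop j

/-- Forward-march prefix transposition: cuts the segment
`π_{m(π)+1}, …, π_{j−1}` and pastes it between `π_{k−1}` and `π_k`. -/
def fmPrefixTransposition (π : List ℕ) (j k : ℕ) : List ℕ :=
  π.take (fm π) ++ (π.drop j).take (k - j) ++
    (π.drop (fm π)).take (j - fm π) ++ π.drop k

/-- A forward-march operation: an FM prefix reversal or an FM prefix
transposition. -/
inductive FMOp
  | rev (j : ℕ)
  | trans (j k : ℕ)

/-- Apply a forward-march operation. -/
def FMOp.apply (π : List ℕ) : FMOp → List ℕ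
  | .rev j => fmPrefixReversal π j
  | .trans j k => fmPrefixTransposition π j k

/-- Validity of a forward-march operation on a permutation `π` of `n`
elements: `m(π)+3 ≤ j ≤ n+1` for an FM prefix reversal, and
`m(π)+2 ≤ j ≤ n`, `j < k ≤ n+1` for an FM prefix transposition
(recall `fm π = m(π) + 1`). -/
def FMOp.Valid (n : ℕ) (π : List ℕ) : FMOp → Prop
  | .rev j => fm π + 2 ≤ j ∧ j ≤ n + 1
  | .trans j k => fm π + 1 ≤ j ∧ j ≤ n ∧ j < k ∧ k ≤ n + 1

/-- Is the forward-march operation an FM prefix reversal? -/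
def FMOp.isRev : FMOp → Bool
  | .rev _ => true
  | _ => false

/-- Apply a sequence of forward-march operations, left to right. -/
def applyFMSeq : List ℕ → List FMOp → List ℕ
  | π, [] => π
  | π, o :: os => applyFMSeq (o.apply π) os

/-- Validity of a sequence of forward-march operations, where each operation
must be valid for the permutation obtained after applying the previous ones. -/
def FMValidSeq (n : ℕ) : List ℕ → List FMOp → Prop
  | _, [] => True
  | π, o :: os => o.Valid n π ∧ FMValidSeq n (o.apply π) os

def IsAdj (a b : ℕ) : Prop := a + 1 = b ∨ b + 1 = a

instance : DecidableRel IsAdj := fun a b => inferInstanceAs (Decidable (a + 1 = b ∨ b + 1 = a))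

theorem isAdj_comm {a b : ℕ} : IsAdj a b ↔ IsAdj b a := Or.comm

def breaks : List ℕ → ℕ
  | a :: b :: l => (if IsAdj a b then 0 else 1) + breaks (b :: l)
  | _ => 0

@[simp] theorem breaks_singleton (a : ℕ) : breaks [a] = 0 := rfl

@[simp] theorem breaks_cons_cons (a b : ℕ) (l : List ℕ) :
    breaks (a :: b :: l) = (if IsAdj a b then 0 else 1) + breaks (b :: l) := rfl

theorem breaks_append_cons (A : List ℕ) (b : ℕ) (B : List ℕ) :
    breaks (A ++ b :: B) = breaks (A ++ [b]) + breaks (b :: B) := by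
  induction A with
  | nil => simp
  | cons a A ih =>
    cases A with
    | nil => simp
    | cons a' A => simp only [List.cons_append, breaks_cons_cons] at ih ⊢; omega

theorem breaks_pair_comm (a b : ℕ) : breaks [a, b] = breaks [b, a] := by
  simp only [breaks_cons_cons, breaks_singleton, isAdj_comm]

theorem breaks_append_cons_cons (A : List ℕ) (a b : ℕ) (B : List ℕ) :
    breaks (A ++ a :: b :: B) = breaks (A ++ [a]) + breaks [a, b] + breaks (b :: B) := by
  rw [breaks_append_cons, breaks_cons_cons, breaks_cons_cons]
  simp only [breaks_singleton]
  omega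

theorem breaks_reverse (l : List ℕ) : breaks l.reverse = breaks l := by
  induction l with
  | nil => rfl
  | cons a l ih =>
    cases l with
    | nil => rfl
    | cons b l =>
      rw [List.reverse_cons, List.reverse_cons, List.append_assoc, List.singleton_append,
        breaks_append_cons_cons, ← List.reverse_cons, ih, breaks_pair_comm,
        breaks_cons_cons a b l, breaks_cons_cons a b]
      simp only [breaks_singleton]
      omega

theorem bp_cons (a : ℕ) (l : List ℕ) : bp (a :: l) = 1 + breaks l := by
  suffices h : ∀ l : List ℕ, (l.zip (l.drop 1)).countP
      (fun p => !(p.1 + 1 == p.2 || p.2 + 1 == p.1)) = breaks l from congrArg (1 + ·) (h l)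
  intro l
  induction l with
  | nil => rfl
  | cons b l ih =>
    cases l with
    | nil => rfl
    | cons c l =>
      simp only [List.drop_one, List.tail_cons] at ih
      simp only [List.drop_one, List.tail_cons, List.zip_cons_cons, List.countP_cons, ih,
        breaks_cons_cons, IsAdj]
      split_ifs <;> simp_all [Nat.add_comm]

/-- Discrete intermediate value theorem. -/
theorem mem_of_breaks_eq_zero {x w v : ℕ} {l : List ℕ} (hl : breaks (x :: l) = 0)
    (hw : w ∈ x :: l) (hv : min x w ≤ v ∧ v ≤ max x w) : v ∈ x :: l := by
  induction l generalizing x with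
  | nil =>
    rw [List.mem_singleton] at hw ⊢
    omega
  | cons y l ih =>
    have hxy : IsAdj x y := by by_contra h; simp [h] at hl
    simp only [breaks_cons_cons, if_pos hxy, Nat.zero_add] at hl
    by_cases hvx : v = x
    · simp [hvx]
    rcases List.mem_cons.1 hw with rfl | hw
    · omega
    · exact List.mem_cons_of_mem _ (ih hl hw (by unfold IsAdj at hxy; omega))

theorem exists_eq_append_of_breaks_cons_ne_zero {x : ℕ} {l : List ℕ}
    (hl : breaks (x :: l) ≠ 0) :
    ∃ F b B, l = F ++ b :: B ∧ ∀ c, breaks (x :: F ++ [c]) ≤ breaks (x :: F ++ [b]) := by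
  induction l generalizing x with
  | nil => simp at hl
  | cons y l ih =>
    by_cases hxy : IsAdj x y
    · obtain ⟨F, b, B, h, hb⟩ := ih (x := y) (by simpa [hxy] using hl)
      refine ⟨y :: F, b, B, by rw [h]; rfl, fun c => ?_⟩
      simpa only [List.cons_append, breaks_cons_cons, if_pos hxy, Nat.zero_add] using hb c
    · refine ⟨[], y, l, rfl, fun c => ?_⟩
      simp only [List.cons_append, List.nil_append, breaks_cons_cons, if_neg hxy, breaks_singleton]
      split_ifs <;> omega

theorem List.exists_cons_eq_append_cons_cons {α : Type*} {v : α} {l : List α} (m : α)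
    (hv : v ∈ l) : ∃ P w Q, m :: l = P ++ w :: v :: Q := by
  induction l generalizing m with
  | nil => simp at hv
  | cons y l ih =>
    rcases List.mem_cons.1 hv with rfl | hv
    · exact ⟨[], m, l, rfl⟩
    · obtain ⟨P, w, Q, h⟩ := ih y hv
      exact ⟨m :: P, w, Q, by rw [h]; rfl⟩

theorem prefixReversal_cons_append (a : ℕ) (A B : List ℕ) :
    prefixReversal (a :: (A ++ B)) (A.length + 1) = a :: (A.reverse ++ B) := by
  simp [prefixReversal]

theorem prefixTransposition_cons_append (a : ℕ) (A B C : List ℕ) :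
    prefixTransposition (a :: (A ++ B ++ C)) (A.length + 1) (A.length + B.length + 1) =
      a :: (B ++ A ++ C) := by
  simp [prefixTransposition]

theorem bp_prefixReversal_lt {a x w v : ℕ} {P Q : List ℕ} (hxv : IsAdj x v)
    (hwv : ¬ IsAdj w v) :
    bp (prefixReversal (a :: x :: P ++ w :: v :: Q) (P.length + 3)) <
      bp (a :: x :: P ++ w :: v :: Q) := by
  set S := x :: P ++ [w]
  have hold : breaks (S ++ v :: Q) = breaks S + breaks [w, v] + breaks (v :: Q) := by
    simpa [S] using breaks_append_cons_cons (x :: P) w v Q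
  have hnew : breaks (S.reverse ++ v :: Q) = breaks S + breaks [x, v] + breaks (v :: Q) := by
    rw [← breaks_reverse S]
    simpa [S] using breaks_append_cons_cons (w :: P.reverse) x v Q
  rw [show a :: x :: P ++ w :: v :: Q = a :: (S ++ v :: Q) by simp [S],
    show P.length + 3 = S.length + 1 by simp [S], prefixReversal_cons_append, bp_cons, bp_cons,
    hold, hnew]
  simp [hxv, hwv]

theorem bp_prefixTransposition_lt {a x b v c : ℕ} {F B C : List ℕ}
    (hvx : IsAdj v x) (hvc : ¬ IsAdj v c)
    (hbc : breaks (x :: F ++ [c]) ≤ breaks (x :: F ++ [b])) :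
    bp (prefixTransposition (a :: x :: F ++ b :: B ++ v :: c :: C) (F.length + 2)
      (F.length + B.length + 4)) < bp (a :: x :: F ++ b :: B ++ v :: c :: C) := by
  have hold : breaks (x :: F ++ (b :: B ++ [v]) ++ c :: C) = breaks (x :: F ++ [b]) +
      breaks (b :: B ++ [v]) + breaks [v, c] + breaks (c :: C) := by
    have h₁ := breaks_append_cons (x :: F) b (B ++ v :: c :: C)
    have h₂ := breaks_append_cons_cons (b :: B) v c C
    simp only [List.cons_append, List.append_assoc, List.nil_append] at h₁ h₂ ⊢
    omega
  have hnew : breaks ((b :: B ++ [v]) ++ x :: F ++ c :: C) = breaks (b :: B ++ [v]) +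
      breaks [v, x] + breaks (x :: F ++ [c]) + breaks (c :: C) := by
    have h₁ := breaks_append_cons_cons (b :: B) v x (F ++ c :: C)
    have h₂ := breaks_append_cons (x :: F) c C
    simp only [List.cons_append, List.append_assoc, List.nil_append] at h₁ h₂ ⊢
    omega
  have hlist := prefixTransposition_cons_append a (x :: F) (b :: B ++ [v]) (c :: C)
  simp only [List.length_cons, List.length_append, List.length_nil] at hlist
  rw [show a :: x :: F ++ b :: B ++ v :: c :: C = a :: (x :: F ++ (b :: B ++ [v]) ++ c :: C)
      by simp,
    show F.length + B.length + 4 = F.length + 1 + (B.length + 1 + (0 + 1)) + 1 by omega,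
    hlist, bp_cons, bp_cons, hold, hnew]
  simp only [breaks_cons_cons, breaks_singleton, if_pos hvx, if_neg hvc] at hbc ⊢
  omega

def RemovesBreakpoint (n : ℕ) (π : List ℕ) (o : PrefOp) : Prop :=
  o.Valid n ∧ o.isTransrev = false ∧ bp (o.apply π) < bp π

theorem exists_removesBreakpoint_of_not_isAdj {n x w v : ℕ} {P Q : List ℕ}
    (hlen : (0 :: x :: P ++ w :: v :: Q).length = n + 2) (hxv : IsAdj x v)
    (hwv : ¬ IsAdj w v) : ∃ o, RemovesBreakpoint n (0 :: x :: P ++ w :: v :: Q) o := by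
  refine ⟨.rev (P.length + 3), ⟨by omega, ?_⟩, rfl, bp_prefixReversal_lt hxv hwv⟩
  simp only [List.length_cons, List.length_append] at hlen
  omega

namespace IsPerm

variable {n : ℕ} {π : List ℕ}

theorem length_eq (hπ : IsPerm n π) : π.length = n + 2 := by
  simpa using hπ.1.length_eq

theorem nodup (hπ : IsPerm n π) : π.Nodup :=
  hπ.1.nodup_iff.2 List.nodup_range

theorem mem_iff (hπ : IsPerm n π) {u : ℕ} : u ∈ π ↔ u < n + 2 := by
  simp [hπ.1.mem_iff]

theorem getLast?_eq (hπ : IsPerm n π) : π.getLast? = some (n + 1) := by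
  have h := hπ.2.2
  rw [List.getD_eq_getElem?_getD, List.getElem?_eq_getElem (by rw [hπ.length_eq]; omega)] at h
  rw [List.getLast?_eq_getElem?, hπ.length_eq,
    List.getElem?_eq_getElem (by rw [hπ.length_eq]; omega)]
  simpa using h

theorem exists_eq_zero_cons_cons (hπ : IsPerm n π) : ∃ x M, π = 0 :: x :: M := by
  match π, hπ.length_eq, hπ.2.1 with
  | a :: x :: M, _, h => exact ⟨x, M, by simpa using h⟩

theorem exists_adj_mem_after_second {x : ℕ} {M : List ℕ} (hπ : IsPerm n (0 :: x :: M))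
    (hx : 2 ≤ x) : ∃ P w v Q, M = P ++ w :: v :: Q ∧ IsAdj x v := by
  have hnd := hπ.nodup
  simp only [List.nodup_cons, List.mem_cons, not_or] at hnd
  have hmem : ∀ u, 1 ≤ u → u < n + 2 → u ≠ x → u ∈ M := fun u hu1 hu2 hux => by
    rcases List.mem_cons.1 (hπ.mem_iff.2 hu2) with rfl | hu
    · omega
    · exact (List.mem_cons.1 hu).resolve_left hux
  have hxn : x < n + 2 := hπ.mem_iff.1 (by simp)
  rcases M with _ | ⟨m, M⟩
  · exact absurd (hmem (x - 1) (by omega) (by omega) (by omega)) List.not_mem_nil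
  by_cases hm : m = x - 1
  · subst hm
    have hlast : n + 1 ∈ (x - 1) :: M := List.mem_of_getLast? (by simpa using hπ.getLast?_eq)
    have hxM : x + 1 ∈ M := by
      have hx1 : x ≠ n + 1 := fun h => hnd.2.1 (h ▸ hlast)
      exact (List.mem_cons.1 (hmem (x + 1) (by omega) (by omega) (by omega))).resolve_left
        (by omega)
    obtain ⟨P, w, Q, h⟩ := List.exists_cons_eq_append_cons_cons (x - 1) hxM
    exact ⟨P, w, x + 1, Q, h, Or.inl rfl⟩
  · have hxM : x - 1 ∈ M :=
      (List.mem_cons.1 (hmem (x - 1) (by omega) (by omega) (by omega))).resolve_left (Ne.symm hm)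
    obtain ⟨P, w, Q, h⟩ := List.exists_cons_eq_append_cons_cons m hxM
    exact ⟨P, w, x - 1, Q, h, Or.inr (by omega)⟩

theorem ne_nil_of_isAdj {x w v : ℕ} {P Q : List ℕ} (hπ : IsPerm n (0 :: x :: P ++ w :: v :: Q))
    (hxw : x ≠ w) (hxv : IsAdj x v) (hwv : IsAdj w v) : Q ≠ [] := by
  rintro rfl
  have hvn : v = n + 1 := by
    have h := hπ.getLast?_eq
    rw [show 0 :: x :: P ++ [w, v] = (0 :: x :: P ++ [w]) ++ [v] by simp,
      List.getLast?_concat] at h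
    simpa using h
  have hx := (hπ.mem_iff (u := x)).1 (by simp)
  have hw := (hπ.mem_iff (u := w)).1 (by simp)
  unfold IsAdj at hxv hwv
  omega

theorem exists_removesBreakpoint_of_isAdj {x w v : ℕ} {P Q : List ℕ}
    (hπ : IsPerm n (0 :: x :: P ++ w :: v :: Q)) (hxv : IsAdj x v) (hwv : IsAdj w v) :
    ∃ o, RemovesBreakpoint n (0 :: x :: P ++ w :: v :: Q) o := by
  have hnd : (x :: P ++ w :: v :: Q).Nodup := (List.nodup_cons.1 hπ.nodup).2
  simp only [List.nodup_cons, List.nodup_append, List.mem_cons] at hnd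
  have hxw : x ≠ w := by grind
  have hv : v ∉ x :: P ++ [w] := by grind
  -- `v` lies strictly between `x` and `w`, so the walk from `x` to `w` must jump somewhere
  have hbrk : breaks (x :: P ++ [w]) ≠ 0 := fun h =>
    hv (mem_of_breaks_eq_zero (w := w) h (by simp) (by unfold IsAdj at hxv hwv; omega))
  obtain ⟨F, b, B, hsplit, hb⟩ := exists_eq_append_of_breaks_cons_ne_zero (l := P ++ [w]) hbrk
  obtain ⟨c, C, rfl⟩ := List.exists_cons_of_ne_nil (hπ.ne_nil_of_isAdj hxw hxv hwv)
  have hc : c ≠ x ∧ c ≠ w := by grind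
  have heq : 0 :: x :: P ++ w :: v :: c :: C = 0 :: x :: F ++ b :: B ++ v :: c :: C := by
    rw [show 0 :: x :: P ++ w :: v :: c :: C = 0 :: x :: (P ++ [w]) ++ v :: c :: C
      by simp,
      hsplit]
    simp
  have hlen := hπ.length_eq
  rw [heq] at hlen ⊢
  simp only [List.length_cons, List.length_append] at hlen
  exact ⟨.trans (F.length + 2) (F.length + B.length + 4), ⟨by omega, by omega, by omega⟩, rfl,
    bp_prefixTransposition_lt (isAdj_comm.1 hxv) (by unfold IsAdj at hxv hwv ⊢; omega) (hb c)⟩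

end IsPerm

/-- if `π₁ ≠ 1` then some prefix reversal or prefix
transposition removes at least one breakpoint. -/
theorem exists_op_removing_breakpoint_of_first_ne_one
    (n : ℕ) (π : List ℕ) (hπ : IsPerm n π)
    (h1 : π.getD 1 0 ≠ 1) :
    ∃ o : PrefOp, o.Valid n ∧ o.isTransrev = false ∧
      bp (o.apply π) ≤ bp π - 1 := by
  obtain ⟨x, M, rfl⟩ := hπ.exists_eq_zero_cons_cons
  have hx0 : x ≠ 0 := fun h => by simpa [h] using hπ.nodup
  have hx : 2 ≤ x := by simp only [List.getD_cons_succ, List.getD_cons_zero] at h1; omega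
  obtain ⟨P, w, v, Q, rfl, hxv⟩ := hπ.exists_adj_mem_after_second hx
  suffices ∃ o, RemovesBreakpoint n (0 :: x :: P ++ w :: v :: Q) o from
    this.imp fun _ ⟨hval, hrev, hlt⟩ => ⟨hval, hrev, Nat.le_sub_one_of_lt hlt⟩
  by_cases hwv : IsAdj w v
  · exact hπ.exists_removesBreakpoint_of_isAdj hxv hwv
  · exact exists_removesBreakpoint_of_not_isAdj hπ.length_eq hxv hwv
end

section
/- Let π = [π_0, π_1, …, π_{n+1}] be a permutation and let m ≥ 1 be such that π_i = i for all 0 ≤ i ≤ m. Suppose there is an index j with m+2 ≤ j ≤ n+1 such that π_j = m+1 and |π_j − π_{j−1}| ≠ 1. Then the prefix transposition τ(1, m+1, j) removes at least one breakpoint, i.e., b(π·τ(1,m+1,j)) ≤ b(π) − 1. -/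
/-!
Write the tail `π₁ ⋯ π_{n+1}` as `S ++ A ++ E` with `S = π₁ ⋯ π_m`, `A = π_{m+1} ⋯ π_{j-1}` and
`E = π_j ⋯ π_{n+1}`; the transposition turns it into `A ++ S ++ E`. Breakpoints inside the blocks
are untouched, so only the junctions count. Before, `m | π_{m+1}` is a breakpoint (injectivity
forces `π_{m+1} > m`, and `π_{m+1} ≠ π_j = m + 1`) and so is `π_{j-1} | m + 1`; afterwards
`m | m + 1` is not, and only `π_{j-1} | 1` can be.
-/

def breakpoint (a b : ℕ) : ℕ := if a + 1 = b ∨ b + 1 = a then 0 else 1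

lemma breakpoint_le_one (a b : ℕ) : breakpoint a b ≤ 1 := by
  unfold breakpoint; split <;> omega

lemma breakpoint_eq_one_iff {a b : ℕ} : breakpoint a b = 1 ↔ ¬(a + 1 = b ∨ b + 1 = a) := by
  unfold breakpoint; split <;> simp_all

lemma bp'_cons_cons (a b : ℕ) (l : List ℕ) :
    bp' (a :: b :: l) = breakpoint a b + bp' (b :: l) := by
  simp only [bp', breakpoint, List.drop_succ_cons, List.drop_zero, List.zip_cons_cons,
    List.countP_cons]
  split <;> simp_all; omega

lemma bp'_singleton (a : ℕ) : bp' [a] = 0 := rfl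

lemma bp'_append {l₁ l₂ : List ℕ} (h₁ : l₁ ≠ []) (h₂ : l₂ ≠ []) :
    bp' (l₁ ++ l₂) = bp' l₁ + breakpoint (l₁.getLast h₁) (l₂.head h₂) + bp' l₂ := by
  induction l₁ with
  | nil => contradiction
  | cons x t ih =>
    obtain ⟨b, l₂, rfl⟩ := List.exists_cons_of_ne_nil h₂
    cases t with
    | nil =>
      simp only [List.cons_append, List.nil_append, bp'_cons_cons, List.getLast_singleton,
        List.head_cons, bp'_singleton, Nat.zero_add]
    | cons y t =>
      simp only [List.cons_append, bp'_cons_cons, List.getLast_cons_cons]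
      rw [← List.cons_append, ih (List.cons_ne_nil _ _)]
      omega

lemma bp_eq_one_add_bp'_drop_one (l : List ℕ) : bp l = 1 + bp' (l.drop 1) := by
  cases l <;> simp [bp, bp']

-- Both sides are `bp' S + bp' A + bp' E` plus the breakpoints at their three junctions.
lemma bp'_append_append_lt_of_breakpoints {S A E : List ℕ}
    (hS : S ≠ []) (hA : A ≠ []) (hE : E ≠ [])
    (hSA : breakpoint (S.getLast hS) (A.head hA) = 1)
    (hAE : breakpoint (A.getLast hA) (E.head hE) = 1)
    (hSE : breakpoint (S.getLast hS) (E.head hE) = 0) :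
    bp' (A ++ S ++ E) < bp' (S ++ A ++ E) := by
  have hAS := breakpoint_le_one (A.getLast hA) (S.head hS)
  have hSAE : S ++ A ++ E = S ++ (A ++ E) := List.append_assoc S A E
  have hASE : A ++ S ++ E = A ++ (S ++ E) := List.append_assoc A S E
  rw [hSAE, hASE, bp'_append hS (by simp [hA]), bp'_append hA (by simp [hS]), bp'_append hA hE,
    bp'_append hS hE, List.head_append_of_ne_nil hA, List.head_append_of_ne_nil hS]
  omega

lemma lt_getElem_of_forall_getD_eq {l : List ℕ} (hl : l.Nodup) {m : ℕ}
    (hsorted : ∀ i ≤ m, l.getD i 0 = i) {k : ℕ} (hmk : m < k) (hk : k < l.length) : m < l[k] := by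
  by_contra! h
  have hfix : l[l[k]] = l[k] := by
    rw [← List.getD_eq_getElem l 0]
    exact hsorted _ h
  have := hl.getElem_inj_iff.1 hfix
  omega

lemma drop_one_eq_append {α : Type*} (l : List α) {i j : ℕ} (hij : i + 1 ≤ j) :
    l.drop 1 = (l.drop 1).take i ++ (l.drop (i + 1)).take (j - (i + 1)) ++ l.drop j := by
  have hdrop_i : l.drop (i + 1) = (l.drop 1).drop i := by rw [List.drop_drop, Nat.add_comm]
  have hdrop_j : l.drop j = (l.drop 1).drop (i + (j - (i + 1))) := by
    rw [List.drop_drop]; congr 1; omega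
  rw [hdrop_i, hdrop_j, ← List.take_add, List.take_append_drop]

lemma getLast_take_drop {α : Type*} {l : List α} {i k : ℕ} (h : (l.drop i).take k ≠ [])
    (hk : i + k ≤ l.length) :
    ((l.drop i).take k).getLast h = l[i + k - 1]'(by simp at h; omega) := by
  rw [List.getLast_eq_getElem]
  simp only [List.getElem_take, List.getElem_drop, List.length_take, List.length_drop]
  congr 1
  simp at h
  omega

lemma drop_one_prefixTransposition {π : List ℕ} (hπ : π ≠ []) (j k : ℕ) :
    (prefixTransposition π j k).drop 1 =
      (π.drop j).take (k - j) ++ (π.drop 1).take (j - 1) ++ π.drop k := by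
  rw [prefixTransposition, List.append_assoc, List.append_assoc,
    List.drop_left' (by simpa [Nat.one_le_iff_ne_zero] using hπ)]
  simp

lemma bp_prefixTransposition_lt_s5 {π : List ℕ} {i j : ℕ} (hi : 1 ≤ i) (hij : i + 1 < j)
    (hj : j < π.length) (hi_succ : breakpoint π[i] π[i + 1] = 1)
    (hj_pred : breakpoint π[j - 1] π[j] = 1) (hij_break : breakpoint π[i] π[j] = 0) :
    bp (prefixTransposition π (i + 1) j) < bp π := by
  have hbefore : bp π = 1 + bp' ((π.drop 1).take i ++ (π.drop (i + 1)).take (j - (i + 1)) ++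
      π.drop j) := by
    rw [bp_eq_one_add_bp'_drop_one, ← drop_one_eq_append π hij.le]
  have hafter : bp (prefixTransposition π (i + 1) j) =
      1 + bp' ((π.drop (i + 1)).take (j - (i + 1)) ++ (π.drop 1).take i ++ π.drop j) := by
    rw [bp_eq_one_add_bp'_drop_one,
      drop_one_prefixTransposition (List.ne_nil_of_length_pos (by omega)), Nat.add_sub_cancel]
  rw [hbefore, hafter, Nat.add_lt_add_iff_left]
  set S := (π.drop 1).take i
  set A := (π.drop (i + 1)).take (j - (i + 1))
  set E := π.drop j
  have hS : S ≠ [] := List.ne_nil_of_length_pos (by simp [S]; omega)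
  have hA : A ≠ [] := List.ne_nil_of_length_pos (by simp [A]; omega)
  have hE : E ≠ [] := List.ne_nil_of_length_pos (by simp [E]; omega)
  have hSlast : S.getLast hS = π[i] := by
    rw [getLast_take_drop hS (by omega)]
    simp only [Nat.add_sub_cancel_left]
  have hAlast : A.getLast hA = π[j - 1] := by
    rw [getLast_take_drop hA (by omega)]
    congr 1
    omega
  have hAhead : A.head hA = π[i + 1] := by simp [A, List.head_take]
  have hEhead : E.head hE = π[j] := List.head_drop hE
  apply bp'_append_append_lt_of_breakpoints hS hA hE
  · rwa [hSlast, hAhead]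
  · rwa [hAlast, hEhead]
  · rwa [hSlast, hEhead]

theorem prefixTransposition_extends_sorted_prefix_general
    (n : ℕ) (π : List ℕ) (hπ : IsPerm n π)
    (m j : ℕ) (hm : 1 ≤ m)
    (hsorted : ∀ i ≤ m, π.getD i 0 = i)
    (hj1 : m + 2 ≤ j)
    (hval : π.getD j 0 = m + 1)
    (hbp : ¬(π.getD (j - 1) 0 + 1 = π.getD j 0 ∨ π.getD j 0 + 1 = π.getD (j - 1) 0)) :
    bp (prefixTransposition π (m + 1) j) ≤ bp π - 1 := by
  have hnodup : π.Nodup := hπ.1.nodup_iff.2 List.nodup_range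
  have hj : j < π.length := by
    by_contra h
    rw [List.getD_eq_default _ _ (not_lt.1 h)] at hval
    omega
  rw [hval, List.getD_eq_getElem _ _ (by omega : j - 1 < π.length)] at hbp
  have hπj : π[j] = m + 1 := (List.getD_eq_getElem _ _ hj).symm.trans hval
  have hπm : π[m] = m := (List.getD_eq_getElem _ _ (by omega)).symm.trans (hsorted m le_rfl)
  have hgt : m < π[m + 1] := lt_getElem_of_forall_getD_eq hnodup hsorted (Nat.lt_add_one m) _
  have hne : π[m + 1] ≠ π[j] := by
    rw [Ne, hnodup.getElem_inj_iff]
    omega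
  have hlt := bp_prefixTransposition_lt_s5 hm (by omega) hj
    (breakpoint_eq_one_iff.2 (by omega)) (by rwa [hπj, breakpoint_eq_one_iff])
    (by simp [breakpoint, hπm, hπj])
  omega

/-- if `π_i = i` for all `0 ≤ i ≤ m` (with `m ≥ 1`) and `π_j = m+1`
with a breakpoint at position `j` for some `m+2 ≤ j ≤ n+1`, then the prefix
transposition `τ(1, m+1, j)` removes at least one breakpoint. -/
theorem prefixTransposition_extends_sorted_prefix
    (n : ℕ) (π : List ℕ) (hπ : IsPerm n π)
    (m j : ℕ) (hm : 1 ≤ m)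
    (hsorted : ∀ i ≤ m, π.getD i 0 = i)
    (hj1 : m + 2 ≤ j) (hj2 : j ≤ n + 1)
    (hval : π.getD j 0 = m + 1)
    (hbp : ¬(π.getD (j - 1) 0 + 1 = π.getD j 0 ∨ π.getD j 0 + 1 = π.getD (j - 1) 0)) :
    bp (prefixTransposition π (m + 1) j) ≤ bp π - 1 :=
  prefixTransposition_extends_sorted_prefix_general n π hπ m j hm hsorted hj1 hval hbp
end
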